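/- arXiv:1704.00243 — 2 statements merged into one kernel-verified Lean document; each statement's English description precedes it below -/
import Mathlib

section
/- For a finite set S, a strictly positive probability mass function ρ on S, and σ₀ : S → ℝ, the Legendre–Fenchel duality holds: inf{ H(μ ∥ ρ) : ⟨σ₀, μ⟩ ≤ α } = sup_{t ≤ 0} [ tα − log ∑_{s} ρ(s) e^{t σ₀(s)} ] for every α with min σ₀ < α ≤ ∑_s σ₀(s) ρ(s). -/
open scoped BigOperators

open Real

lemma aux_xexp_le {t x : ℝ} (ht : t < 0) (hx : 0 ≤ x) :
    x * Real.exp (t * x) ≤ -1 / t := by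
  have ht' : (0:ℝ) < -t := neg_pos.2 ht
  have h1 : (-t) * x + 1 ≤ Real.exp ((-t) * x) := Real.add_one_le_exp _
  have hee : Real.exp ((-t) * x) * Real.exp (t * x) = 1 := by
    rw [← Real.exp_add]; ring_nf; exact Real.exp_zero
  have hE : (0:ℝ) < Real.exp (t * x) := Real.exp_pos _
  have key : x * Real.exp (t * x) * (-t) ≤ 1 := by nlinarith
  have h2 : -1 / t = 1 / (-t) := by rw [div_neg, neg_div]
  rw [h2, le_div_iff₀ ht']
  exact key

lemma aux_gibbs {S : Type*} [Fintype S] (μ ν : S → ℝ) (hμ : ∀ s, 0 ≤ μ s)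
    (hν : ∀ s, 0 < ν s) (hμ1 : ∑ s, μ s = 1) (hν1 : ∑ s, ν s = 1) :
    0 ≤ ∑ s, μ s * Real.log (μ s / ν s) := by
  have h : ∀ s, μ s - ν s ≤ μ s * Real.log (μ s / ν s) := by
    intro s
    rcases eq_or_lt_of_le (hμ s) with h0 | h0
    · simp [← h0]
      linarith [(hν s).le]
    · have hlog : Real.log (ν s / μ s) ≤ ν s / μ s - 1 :=
        Real.log_le_sub_one_of_pos (div_pos (hν s) h0)
      have hid : Real.log (μ s / ν s) = - Real.log (ν s / μ s) := by
        rw [Real.log_div h0.ne' (hν s).ne', Real.log_div (hν s).ne' h0.ne']; ring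
      rw [hid]
      have := mul_le_mul_of_nonneg_left hlog h0.le
      have hne : μ s ≠ 0 := h0.ne'
      rw [mul_sub, mul_div_cancel₀ _ hne] at this
      linarith
  calc (0:ℝ) = ∑ s, (μ s - ν s) := by rw [Finset.sum_sub_distrib, hμ1, hν1]; ring
  _ ≤ _ := Finset.sum_le_sum (fun s _ => h s)

-- tilting identity
lemma aux_tilt {S : Type*} [Fintype S] [Nonempty S] (ρ : S → ℝ) (hρpos : ∀ s, 0 < ρ s)
    (σ₀ : S → ℝ) (t : ℝ) (Z : ℝ) (hZ : Z = ∑ s, ρ s * Real.exp (t * σ₀ s))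
    (μ : S → ℝ) (hμ : ∀ s, 0 ≤ μ s) (hμ1 : ∑ s, μ s = 1) :
    ∑ s, μ s * Real.log (μ s / (ρ s * Real.exp (t * σ₀ s) / Z))
      = (∑ s, μ s * Real.log (μ s / ρ s)) - t * (∑ s, σ₀ s * μ s) + Real.log Z := by
  have hZpos : 0 < Z := by
    rw [hZ]
    exact Finset.sum_pos (fun s _ => mul_pos (hρpos s) (Real.exp_pos _)) Finset.univ_nonempty
  have hterm : ∀ s, μ s * Real.log (μ s / (ρ s * Real.exp (t * σ₀ s) / Z))
      = μ s * Real.log (μ s / ρ s) - (σ₀ s * μ s) * t + μ s * Real.log Z := by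
    intro s
    rcases eq_or_lt_of_le (hμ s) with h0 | h0
    · simp [← h0]
    · have hρe : (0:ℝ) < ρ s * Real.exp (t * σ₀ s) := mul_pos (hρpos s) (Real.exp_pos _)
      have hν : (0:ℝ) < ρ s * Real.exp (t * σ₀ s) / Z := div_pos hρe hZpos
      rw [Real.log_div h0.ne' hν.ne', Real.log_div hρe.ne' hZpos.ne',
        Real.log_mul (hρpos s).ne' (Real.exp_pos _).ne', Real.log_exp,
        Real.log_div h0.ne' (hρpos s).ne']
      ring
  rw [Finset.sum_congr rfl (fun s _ => hterm s), Finset.sum_add_distrib,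
    Finset.sum_sub_distrib, ← Finset.sum_mul, ← Finset.sum_mul, hμ1]
  ring


/-- Legendre–Fenchel duality for the constrained relative entropy:
`inf { H(μ ∥ ρ) : ⟨σ₀, μ⟩ ≤ α } = sup_{t ≤ 0} (tα − log ∑_s ρ(s) e^{t σ₀(s)})`
for `min σ₀ < α ≤ ⟨σ₀, ρ⟩`. -/
theorem relEntropy_duality {S : Type*} [Fintype S] [Nonempty S]
    (ρ : S → ℝ) (hρpos : ∀ s, 0 < ρ s) (hρsum : ∑ s, ρ s = 1)
    (σ₀ : S → ℝ) (α : ℝ)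
    (hα₁ : Finset.univ.inf' Finset.univ_nonempty σ₀ < α)
    (hα₂ : α ≤ ∑ s, σ₀ s * ρ s) :
    sInf { h : ℝ | ∃ μ : S → ℝ, (∀ s, 0 ≤ μ s) ∧ (∑ s, μ s = 1) ∧
        (∑ s, σ₀ s * μ s ≤ α) ∧ h = ∑ s, μ s * Real.log (μ s / ρ s) }
      = sSup { y : ℝ | ∃ t : ℝ, t ≤ 0 ∧
        y = t * α - Real.log (∑ s, ρ s * Real.exp (t * σ₀ s)) } := by
  classical
  set A := { h : ℝ | ∃ μ : S → ℝ, (∀ s, 0 ≤ μ s) ∧ (∑ s, μ s = 1) ∧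
        (∑ s, σ₀ s * μ s ≤ α) ∧ h = ∑ s, μ s * Real.log (μ s / ρ s) } with hA
  set B := { y : ℝ | ∃ t : ℝ, t ≤ 0 ∧
        y = t * α - Real.log (∑ s, ρ s * Real.exp (t * σ₀ s)) } with hB
  set Z : ℝ → ℝ := fun t => ∑ s, ρ s * Real.exp (t * σ₀ s) with hZdef
  have hZpos : ∀ t, 0 < Z t := fun t =>
    Finset.sum_pos (fun s _ => mul_pos (hρpos s) (Real.exp_pos _)) Finset.univ_nonempty
  -- tilted measures
  set ν : ℝ → S → ℝ := fun t s => ρ s * Real.exp (t * σ₀ s) / Z t with hνdef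
  have hνpos : ∀ t s, 0 < ν t s := fun t s =>
    div_pos (mul_pos (hρpos s) (Real.exp_pos _)) (hZpos t)
  have hνsum : ∀ t, ∑ s, ν t s = 1 := by
    intro t
    simp only [hνdef, ← Finset.sum_div]
    exact div_self (hZpos t).ne'
  -- weak duality
  have weak : ∀ b ∈ B, ∀ a ∈ A, b ≤ a := by
    rintro b ⟨t, ht, rfl⟩ a ⟨μ, hμ0, hμ1, hμα, rfl⟩
    have hg := aux_gibbs μ (ν t) hμ0 (hνpos t) hμ1 (hνsum t)
    have hid := aux_tilt ρ hρpos σ₀ t (Z t) rfl μ hμ0 hμ1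
    have h1 : t * α ≤ t * (∑ s, σ₀ s * μ s) := mul_le_mul_of_nonpos_left hμα ht
    have h2 : 0 ≤ (∑ s, μ s * Real.log (μ s / ρ s)) - t * (∑ s, σ₀ s * μ s) + Real.log (Z t) := by
      rw [← hid]; exact hg
    linarith
  -- the expectation function
  set g : ℝ → ℝ := fun t => (∑ s, σ₀ s * (ρ s * Real.exp (t * σ₀ s))) / Z t with hgdef
  have hgν : ∀ t, ∑ s, σ₀ s * ν t s = g t := by
    intro t
    simp only [hνdef, hgdef]
    rw [Finset.sum_div]
    exact Finset.sum_congr rfl fun s _ => by ring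
  have hg0 : g 0 = ∑ s, σ₀ s * ρ s := by
    simp [hgdef, hZdef, hρsum]
  -- find t₁ < 0 with g t₁ < α
  obtain ⟨s₀, -, hs₀⟩ := Finset.exists_mem_eq_inf' Finset.univ_nonempty σ₀
  set m : ℝ := Finset.univ.inf' Finset.univ_nonempty σ₀ with hmdef
  have hm_le : ∀ s, m ≤ σ₀ s := fun s => Finset.inf'_le _ (Finset.mem_univ s)
  have hc : (0:ℝ) < (α - m) * ρ s₀ := mul_pos (by linarith) (hρpos s₀)
  set t₁ : ℝ := -(1 / ((α - m) * ρ s₀)) - 1 with ht₁def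
  have ht₁neg : t₁ < 0 := by
    have : 0 < 1 / ((α - m) * ρ s₀) := by positivity
    simp only [ht₁def]; linarith
  have hrecip : -1 / t₁ < (α - m) * ρ s₀ := by
    rw [div_lt_iff_of_neg ht₁neg]
    have h1 : 0 < 1 / ((α - m) * ρ s₀) := by positivity
    have : ((α - m) * ρ s₀) * (1 / ((α - m) * ρ s₀)) = 1 := mul_one_div_cancel hc.ne'
    simp only [ht₁def]
    nlinarith
  have hgt₁ : g t₁ < α := by
    rw [hgdef, div_lt_iff₀ (hZpos t₁)]
    -- ∑ σ₀ ρ e < α Z = m Z + (α - m) Z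
    have hsplit : ∑ s, σ₀ s * (ρ s * Real.exp (t₁ * σ₀ s))
        = m * Z t₁ + ∑ s, (σ₀ s - m) * (ρ s * Real.exp (t₁ * σ₀ s)) := by
      rw [hZdef]
      rw [Finset.mul_sum, ← Finset.sum_add_distrib]
      apply Finset.sum_congr rfl
      intro s _; ring
    have hbound : ∀ s, (σ₀ s - m) * (ρ s * Real.exp (t₁ * σ₀ s))
        ≤ Real.exp (t₁ * m) * (-1 / t₁) * ρ s := by
      intro s
      have hx : 0 ≤ σ₀ s - m := by linarith [hm_le s]
      have := aux_xexp_le ht₁neg hx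
      have hsplit2 : Real.exp (t₁ * σ₀ s) = Real.exp (t₁ * m) * Real.exp (t₁ * (σ₀ s - m)) := by
        rw [← Real.exp_add]; ring_nf
      calc (σ₀ s - m) * (ρ s * Real.exp (t₁ * σ₀ s))
          = Real.exp (t₁ * m) * ((σ₀ s - m) * Real.exp (t₁ * (σ₀ s - m))) * ρ s := by
            rw [hsplit2]; ring
        _ ≤ Real.exp (t₁ * m) * (-1 / t₁) * ρ s := by
            have h1 := mul_le_mul_of_nonneg_left this (Real.exp_pos (t₁ * m)).le
            exact mul_le_mul_of_nonneg_right h1 (hρpos s).le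
    have hsum_bound : ∑ s, (σ₀ s - m) * (ρ s * Real.exp (t₁ * σ₀ s))
        ≤ Real.exp (t₁ * m) * (-1 / t₁) := by
      calc ∑ s, (σ₀ s - m) * (ρ s * Real.exp (t₁ * σ₀ s))
          ≤ ∑ s, Real.exp (t₁ * m) * (-1 / t₁) * ρ s :=
            Finset.sum_le_sum (fun s _ => hbound s)
        _ = Real.exp (t₁ * m) * (-1 / t₁) := by rw [← Finset.mul_sum, hρsum, mul_one]
    have hZlb : ρ s₀ * Real.exp (t₁ * m) ≤ Z t₁ := by
      rw [hZdef]
      have : ρ s₀ * Real.exp (t₁ * m) = ρ s₀ * Real.exp (t₁ * σ₀ s₀) := by rw [← hs₀]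
      rw [this]
      exact Finset.single_le_sum (f := fun s => ρ s * Real.exp (t₁ * σ₀ s))
        (fun s _ => (mul_pos (hρpos s) (Real.exp_pos _)).le) (Finset.mem_univ s₀)
    have hstrict : Real.exp (t₁ * m) * (-1 / t₁) < (α - m) * Z t₁ := by
      calc Real.exp (t₁ * m) * (-1 / t₁) < Real.exp (t₁ * m) * ((α - m) * ρ s₀) :=
            mul_lt_mul_of_pos_left hrecip (Real.exp_pos _)
        _ = (α - m) * (ρ s₀ * Real.exp (t₁ * m)) := by ring
        _ ≤ (α - m) * Z t₁ := mul_le_mul_of_nonneg_left hZlb (by linarith)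
    have : m * Z t₁ + (α - m) * Z t₁ = α * Z t₁ := by ring
    linarith [hsplit, hsum_bound, hstrict]
  -- continuity of g
  have hgcont : Continuous g := by
    apply Continuous.div
    · exact continuous_finset_sum _ (fun s _ => by fun_prop)
    · exact continuous_finset_sum _ (fun s _ => by fun_prop)
    · exact fun t => (hZpos t).ne'
  -- IVT
  have hmem : α ∈ Set.Icc (g t₁) (g 0) := ⟨hgt₁.le, by rw [hg0]; exact hα₂⟩
  obtain ⟨tstar, htstar_mem, hgtstar⟩ :=
    intermediate_value_Icc ht₁neg.le (hgcont.continuousOn) hmem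
  have htstar_le : tstar ≤ 0 := htstar_mem.2
  -- the optimal measure
  set μs : S → ℝ := ν tstar with hμsdef
  have hμs0 : ∀ s, 0 ≤ μs s := fun s => (hνpos tstar s).le
  have hμs1 : ∑ s, μs s = 1 := hνsum tstar
  have hμsα : ∑ s, σ₀ s * μs s = α := by rw [hμsdef, hgν, hgtstar]
  -- value of H at μs
  have hHval : ∑ s, μs s * Real.log (μs s / ρ s)
      = tstar * α - Real.log (Z tstar) := by
    have hid := aux_tilt ρ hρpos σ₀ tstar (Z tstar) rfl μs hμs0 hμs1
    have hzero : ∑ s, μs s * Real.log (μs s / (ρ s * Real.exp (tstar * σ₀ s) / Z tstar)) = 0 := by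
      apply Finset.sum_eq_zero
      intro s _
      have : μs s / (ρ s * Real.exp (tstar * σ₀ s) / Z tstar) = 1 :=
        div_self (hνpos tstar s).ne'
      rw [this, Real.log_one, mul_zero]
    rw [hzero] at hid
    rw [hμsα] at hid
    linarith
  set astar : ℝ := tstar * α - Real.log (Z tstar) with hastar
  have haA : astar ∈ A := ⟨μs, hμs0, hμs1, le_of_eq hμsα, hHval.symm⟩
  have haB : astar ∈ B := ⟨tstar, htstar_le, rfl⟩
  have hAne : A.Nonempty := ⟨astar, haA⟩
  have hBne : B.Nonempty := ⟨astar, haB⟩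
  have hAbdd : BddBelow A := ⟨astar, fun a ha => weak astar haB a ha⟩
  have hBbdd : BddAbove B := ⟨astar, fun b hb => weak b hb astar haA⟩
  apply le_antisymm
  · exact csInf_le_of_le hAbdd haA (le_csSup hBbdd haB)
  · exact csSup_le hBne (fun b hb => le_csInf hAne (fun a ha => weak b hb a ha))
end

section
/- Let (f_n) be a sequence of convex functions f_n : ℝ → ℝ converging pointwise to a convex function f : ℝ → ℝ. Then the convex conjugates satisfy, for every α in the interior of the domain where f* is finite, f*(α) = lim_{δ → 0} limsup_{n → ∞} inf_{|β − α| < δ} f_n*(β). -/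
open Filter
open scoped Topology

lemma slope_slope {g : ℝ → ℝ} (hg : ConvexOn ℝ Set.univ g) {x y u v : ℝ}
    (hxy : x < y) (hyu : y ≤ u) (huv : u < v) :
    (g y - g x) / (y - x) ≤ (g v - g u) / (v - u) := by
  have h1 : (g y - g x) / (y - x) ≤ (g v - g x) / (v - x) :=
    hg.secant_mono (Set.mem_univ x) (Set.mem_univ y) (Set.mem_univ v)
      (by intro h; subst h; linarith) (by intro h; subst h; linarith) (by linarith)
  have h2 : (g x - g v) / (x - v) ≤ (g u - g v) / (u - v) :=
    hg.secant_mono (Set.mem_univ v) (Set.mem_univ x) (Set.mem_univ u)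
      (by intro h; subst h; linarith) (by intro h; subst h; linarith) (by linarith)
  have e1 : (g x - g v) / (x - v) = (g v - g x) / (v - x) := by
    rw [← neg_div_neg_eq]; ring_nf
  have e2 : (g u - g v) / (u - v) = (g v - g u) / (v - u) := by
    rw [← neg_div_neg_eq]; ring_nf
  rw [e1, e2] at h2
  linarith

lemma keyR {g : ℝ → ℝ} (hg : ConvexOn ℝ Set.univ g) (a : ℝ) {p q t : ℝ}
    (hpq : p < q) (hqt : q ≤ t) :
    t * a - g t ≤ (q * a - g q) + (t - q) * (((q * a - g q) - (p * a - g p)) / (q - p)) := by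
  rcases eq_or_lt_of_le hqt with rfl | hqt
  · simp
  have hs := hg.slope_mono_adjacent (Set.mem_univ p) (Set.mem_univ t) hpq hqt
  have h1 : (g q - g p) / (q - p) * (t - q) ≤ g t - g q := by
    rw [← le_div_iff₀ (by linarith)]; exact hs
  have h2 : ((q * a - g q) - (p * a - g p)) / (q - p) = a - (g q - g p) / (q - p) := by
    have hne : q - p ≠ 0 := by linarith
    field_simp; ring
  rw [h2]
  nlinarith [h1]

lemma keyL {g : ℝ → ℝ} (hg : ConvexOn ℝ Set.univ g) (a : ℝ) {p q t : ℝ}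
    (hqp : q < p) (htq : t ≤ q) :
    t * a - g t ≤ (q * a - g q) + (q - t) * (((q * a - g q) - (p * a - g p)) / (p - q)) := by
  rcases eq_or_lt_of_le htq with rfl | htq
  · simp
  have hs := hg.slope_mono_adjacent (Set.mem_univ t) (Set.mem_univ p) htq hqp
  have h1 : g q - g t ≤ (g p - g q) / (p - q) * (q - t) := by
    rw [← div_le_iff₀ (by linarith)]
    exact hs
  have h2 : ((q * a - g q) - (p * a - g p)) / (p - q) = -a + (g p - g q) / (p - q) := by
    have hne : p - q ≠ 0 := by linarith
    field_simp; ring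
  rw [h2]
  nlinarith [h1]

set_option maxHeartbeats 2000000 in
lemma evtl_upper (f : ℝ → ℝ) (fn : ℕ → ℝ → ℝ) (hf : ConvexOn ℝ Set.univ f)
    (hfn : ∀ n, ConvexOn ℝ Set.univ (fn n))
    (hconv : ∀ t : ℝ, Tendsto (fun n => fn n t) atTop (𝓝 (f t)))
    (α ε C r : ℝ) (hε : 0 < ε)
    (hC1 : ∀ t, t * (α + ε) - f t ≤ C) (hC2 : ∀ t, t * (α - ε) - f t ≤ C)
    (hr : ∀ t, t * α - f t ≤ r) (γ : ℝ) (hγ : 0 < γ) :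
    ∀ᶠ n in atTop, ∀ t, t * α - fn n t ≤ r + γ := by
  -- the limit "transform" values
  set φ : ℝ → ℝ := fun t => t * α - f t with hφdef
  have hD : (0:ℝ) < C + |f 0| + 1 := by
    have := hC1 0; simp at this
    have : -f 0 ≤ C := by linarith
    have := neg_abs_le (f 0)
    have := le_abs_self (f 0)
    nlinarith [abs_nonneg (f 0)]
  set D := C + |f 0| + 1 with hDdef
  set R := max 1 (4 * D / ε) with hRdef
  have hR1 : (1:ℝ) ≤ R := le_max_left _ _
  have hR0 : (0:ℝ) < R := by linarith
  have hRD : 4 * D / ε ≤ R := le_max_right _ _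
  have hRD' : 2 * D ≤ R / 2 * ε := by
    have : 4 * D / ε * ε = 4 * D := by field_simp
    nlinarith [mul_le_mul_of_nonneg_right hRD hε.le]
  -- right steep-slope fact
  have fact_right : ∀ q v : ℝ, R / 2 ≤ q → q < v → α + ε / 2 ≤ (f v - f q) / (v - q) := by
    intro q v hq hqv
    have hq0 : (0:ℝ) < q := by linarith
    have h0 := hf.slope_mono_adjacent (Set.mem_univ 0) (Set.mem_univ v) hq0 hqv
    have hfq : q * (α + ε) - C ≤ f q := by linarith [hC1 q]
    have hDq : 2 * D ≤ q * ε := by nlinarith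
    have hkey : α + ε / 2 ≤ (f q - f 0) / (q - 0) := by
      rw [le_div_iff₀ (by linarith)]
      have : f 0 ≤ |f 0| := le_abs_self _
      nlinarith
    linarith
  -- left steep-slope fact
  have fact_left : ∀ u q : ℝ, q ≤ -(R / 2) → u < q → (f q - f u) / (q - u) ≤ α - ε / 2 := by
    intro u q hq huq
    have hq0 : q < 0 := by linarith
    have h0 := hf.slope_mono_adjacent (Set.mem_univ u) (Set.mem_univ 0) huq hq0
    have hfq : q * (α - ε) - C ≤ f q := by linarith [hC2 q]
    have hDq : 2 * D ≤ -q * ε := by nlinarith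
    have hkey : (f 0 - f q) / (0 - q) ≤ α - ε / 2 := by
      rw [div_le_iff₀ (by linarith)]
      have : f 0 ≤ |f 0| := le_abs_self _
      nlinarith
    linarith
  -- two-sided slope bounds on [-R, R]
  set m₀ := f (-R) - f (-R - 1) with hm₀def
  set M₀ := f (R + 1) - f R with hM₀def
  have slope_lb : ∀ p q : ℝ, -R ≤ p → p < q → m₀ ≤ (f q - f p) / (q - p) := by
    intro p q hp hpq
    have := slope_slope hf (x := -R - 1) (y := -R) (u := p) (v := q)
      (by linarith) hp hpq
    have e : (f (-R) - f (-R - 1)) / (-R - (-R - 1)) = m₀ := by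
      rw [show -R - (-R - 1) = (1:ℝ) by ring, div_one]
    linarith [e ▸ this]
  have slope_ub : ∀ p q : ℝ, p < q → q ≤ R → (f q - f p) / (q - p) ≤ M₀ := by
    intro p q hpq hq
    have := slope_slope hf (x := p) (y := q) (u := R) (v := R + 1) hpq hq (by linarith)
    have e : (f (R + 1) - f R) / (R + 1 - R) = M₀ := by
      rw [show R + 1 - R = (1:ℝ) by ring, div_one]
    linarith [e ▸ this]
  set L := |α| + |m₀| + |M₀| + 1 with hLdef
  have hL0 : (0:ℝ) < L := by positivity
  set d := min (γ / (4 * L)) (R / 2) with hddef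
  have hd0 : (0:ℝ) < d := lt_min (by positivity) (by linarith)
  set N : ℕ := ⌈2 * R / d⌉₊ + 2 with hNdef
  have hN2 : 2 ≤ N := by omega
  have hNpos : (0:ℝ) < (N : ℝ) := by positivity
  set h := 2 * R / N with hhdef
  have hh0 : (0:ℝ) < h := by positivity
  have hhd : h ≤ d := by
    rw [hhdef, div_le_iff₀ hNpos]
    have h1 : (2 * R / d : ℝ) ≤ (⌈2 * R / d⌉₊ : ℝ) := Nat.le_ceil _
    have h2 : ((⌈2 * R / d⌉₊ : ℕ) : ℝ) ≤ (N : ℝ) := by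
      have : (⌈2 * R / d⌉₊ : ℕ) ≤ N := by omega
      exact_mod_cast this
    have h3 : 2 * R / d * d = 2 * R := by field_simp
    nlinarith
  have hhR : h ≤ R / 2 := hhd.trans (min_le_right _ _)
  have hhγ : h * L ≤ γ / 4 := by
    have h1 : h ≤ γ / (4 * L) := hhd.trans (min_le_left _ _)
    rw [le_div_iff₀ (by positivity)] at h1
    ring_nf at h1 ⊢
    linarith
  set x : ℕ → ℝ := fun i => -R + i * h with hxdef
  have hx0 : x 0 = -R := by simp [hxdef]
  have hxN : x N = R := by
    simp only [hxdef, hhdef]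
    field_simp
    ring
  have hxsucc : ∀ i : ℕ, x (i + 1) = x i + h := by
    intro i; simp only [hxdef]; push_cast; ring
  clear_value φ D R m₀ M₀ L d N h x
  have hxmem : ∀ i : ℕ, i ≤ N → -R ≤ x i ∧ x i ≤ R := by
    intro i hi
    constructor
    · have h1 : (0:ℝ) ≤ (i:ℝ) * h := mul_nonneg (Nat.cast_nonneg i) hh0.le
      simp only [hxdef]; linarith
    · have : (i : ℝ) * h ≤ (N : ℝ) * h := by
        have : (i:ℝ) ≤ (N:ℝ) := by exact_mod_cast hi
        nlinarith
      have hNh : (N : ℝ) * h = 2 * R := by rw [hhdef]; field_simp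
      simp only [hxdef]; linarith
  have hφr : ∀ t, φ t ≤ r := by intro t; rw [hφdef]; exact hr t
  have grid_diff : ∀ i : ℕ, i + 1 ≤ N →
      |φ (x (i + 1)) - φ (x i)| ≤ h * L := by
    intro i hi
    have hmem1 := hxmem i (by omega)
    have hmem2 := hxmem (i + 1) hi
    have hlt : x i < x (i + 1) := by rw [hxsucc]; linarith
    have hlb := slope_lb (x i) (x (i + 1)) hmem1.1 hlt
    have hub := slope_ub (x i) (x (i + 1)) hlt hmem2.2
    rw [hxsucc i, show x i + h - x i = h by ring] at hlb hub
    have hlb' : m₀ * h ≤ f (x i + h) - f (x i) := (le_div_iff₀ hh0).mp hlb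
    have hub' : f (x i + h) - f (x i) ≤ M₀ * h := (div_le_iff₀ hh0).mp hub
    have hφdiff : φ (x (i + 1)) - φ (x i) = h * α - (f (x i + h) - f (x i)) := by
      rw [hφdef, hxsucc i]; ring
    have ha1 : h * α ≤ h * |α| := mul_le_mul_of_nonneg_left (le_abs_self α) hh0.le
    have ha2 : h * (-|α|) ≤ h * α := mul_le_mul_of_nonneg_left (neg_abs_le α) hh0.le
    have hm1 : m₀ * h ≥ -|m₀| * h := mul_le_mul_of_nonneg_right (neg_abs_le m₀) hh0.le
    have hM1 : M₀ * h ≤ |M₀| * h := mul_le_mul_of_nonneg_right (le_abs_self M₀) hh0.le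
    have hLexp : h * L = h * |α| + h * |m₀| + h * |M₀| + h := by rw [hLdef]; ring
    rw [abs_le, hφdiff]
    constructor <;>
      nlinarith [mul_nonneg hh0.le (abs_nonneg m₀), mul_nonneg hh0.le (abs_nonneg M₀),
        mul_nonneg hh0.le (abs_nonneg α), hh0.le]
  have end_right : φ (x N) - φ (x (N - 1)) ≤ -(h * ε / 2) := by
    have hsN : x (N - 1) + h = x N := by
      rw [← hxsucc (N - 1), show N - 1 + 1 = N by omega]
    have hge : R / 2 ≤ x (N - 1) := by
      have := hxN
      linarith [hhR]
    have hlt : x (N - 1) < x N := by linarith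
    have hfr := fact_right (x (N - 1)) (x N) hge hlt
    rw [show x N - x (N - 1) = h by linarith] at hfr
    have hfr' : (α + ε / 2) * h ≤ f (x N) - f (x (N - 1)) := by
      rw [← le_div_iff₀ hh0]; exact hfr
    have : φ (x N) - φ (x (N - 1)) = (x N - x (N - 1)) * α - (f (x N) - f (x (N - 1))) := by
      rw [hφdef]; ring
    rw [this, show x N - x (N - 1) = h by linarith]
    nlinarith
  have end_left : φ (x 0) - φ (x 1) ≤ -(h * ε / 2) := by
    have hs1 : x 1 = x 0 + h := hxsucc 0
    have hle : x 1 ≤ -(R / 2) := by rw [hs1, hx0]; linarith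
    have hlt : x 0 < x 1 := by rw [hs1]; linarith
    have hfl := fact_left (x 0) (x 1) hle hlt
    rw [show x 1 - x 0 = h by rw [hs1]; ring] at hfl
    have hfl' : f (x 1) - f (x 0) ≤ (α - ε / 2) * h := by
      rw [← div_le_iff₀ hh0]; exact hfl
    have : φ (x 0) - φ (x 1) = -((x 1 - x 0) * α) + (f (x 1) - f (x 0)) := by
      rw [hφdef]; ring
    rw [this, show x 1 - x 0 = h by rw [hs1]; ring]
    nlinarith
  set η := min (γ / 8) (h * ε / 8) with hηdef
  have hη0 : (0:ℝ) < η := lt_min (by linarith) (by nlinarith)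
  have hηγ : η ≤ γ / 8 := min_le_left _ _
  have hηε : η ≤ h * ε / 8 := min_le_right _ _
  clear_value η
  have event : ∀ᶠ n in atTop, ∀ i ∈ Finset.range (N + 1),
      |(x i * α - fn n (x i)) - φ (x i)| < η := by
    rw [eventually_all_finset]
    intro i _
    have htd : Tendsto (fun n => x i * α - fn n (x i)) atTop (𝓝 (φ (x i))) := by
      rw [hφdef]
      exact Tendsto.const_sub _ (hconv (x i))
    exact htd.eventually (eventually_abs_sub_lt _ hη0)
  filter_upwards [event] with n hn t
  have hclose : ∀ i : ℕ, i ≤ N → |(x i * α - fn n (x i)) - φ (x i)| < η := by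
    intro i hi
    exact hn i (Finset.mem_range.mpr (by omega))
  have habs : ∀ i : ℕ, i ≤ N →
      (x i * α - fn n (x i)) < φ (x i) + η ∧ φ (x i) - η < (x i * α - fn n (x i)) := by
    intro i hi
    have := hclose i hi
    rw [abs_lt] at this
    constructor <;> linarith [this.1, this.2]
  by_cases hA : x N ≤ t
  · -- right tail
    have hstep : x N = x (N - 1) + h := by
      rw [← hxsucc (N - 1), show N - 1 + 1 = N from by omega]
    have hk := keyR (hfn n) α (p := x (N - 1)) (q := x N) (by linarith) hA
    have hden : x N - x (N - 1) = h := by linarith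
    rw [hden] at hk
    have hcN := habs N (le_refl N)
    have hcN1 := habs (N - 1) (by omega)
    have hs_neg : (x N * α - fn n (x N)) - (x (N - 1) * α - fn n (x (N - 1))) ≤ 0 := by
      have h1 : (x N * α - fn n (x N)) - (x (N - 1) * α - fn n (x (N - 1)))
          ≤ (φ (x N) - φ (x (N - 1))) + 2 * η := by linarith [hcN.1, hcN1.2]
      linarith [end_right, hηε]
    have hprod : (t - x N) * (((x N * α - fn n (x N)) - (x (N - 1) * α - fn n (x (N - 1)))) / h)
        ≤ 0 :=
      mul_nonpos_of_nonneg_of_nonpos (by linarith)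
        (div_nonpos_of_nonpos_of_nonneg hs_neg hh0.le)
    have := hφr (x N)
    linarith [hcN.1, hηγ]
  by_cases hB : t ≤ x 0
  · -- left tail
    have hstep : x 1 = x 0 + h := hxsucc 0
    have hk := keyL (hfn n) α (p := x 1) (q := x 0) (by linarith) hB
    have hden : x 1 - x 0 = h := by linarith
    rw [hden] at hk
    have hc0 := habs 0 (by omega)
    have hc1 := habs 1 (by omega)
    have hs_neg : (x 0 * α - fn n (x 0)) - (x 1 * α - fn n (x 1)) ≤ 0 := by
      have h1 : (x 0 * α - fn n (x 0)) - (x 1 * α - fn n (x 1))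
          ≤ (φ (x 0) - φ (x 1)) + 2 * η := by linarith [hc0.1, hc1.2]
      linarith [end_left, hηε]
    have hprod : (x 0 - t) * (((x 0 * α - fn n (x 0)) - (x 1 * α - fn n (x 1))) / h) ≤ 0 :=
      mul_nonpos_of_nonneg_of_nonpos (by linarith)
        (div_nonpos_of_nonpos_of_nonneg hs_neg hh0.le)
    have := hφr (x 0)
    linarith [hc0.1, hηγ]
  -- middle: x 0 < t < x N
  push_neg at hA hB
  have hLh_nonneg : (0:ℝ) ≤ h * L := mul_nonneg hh0.le hL0.le
  by_cases hC : t ≤ x 1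
  · -- first cell, extrapolate from the right using x 1, x 2
    have hstep : x 2 = x 1 + h := hxsucc 1
    have hstep0 : x 1 = x 0 + h := hxsucc 0
    have hk := keyL (hfn n) α (p := x 2) (q := x 1) (by linarith) hC
    have hden : x 2 - x 1 = h := by linarith
    rw [hden] at hk
    have hc1 := habs 1 (by omega)
    have hc2 := habs 2 (by omega)
    have hgd : |φ (x 2) - φ (x 1)| ≤ h * L := grid_diff 1 (by omega)
    rw [abs_le] at hgd
    have hs_ub : (x 1 * α - fn n (x 1)) - (x 2 * α - fn n (x 2)) ≤ h * L + 2 * η := by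
      linarith [hc1.1, hc2.2, hgd.1]
    have hprod : (x 1 - t) * (((x 1 * α - fn n (x 1)) - (x 2 * α - fn n (x 2))) / h)
        ≤ h * L + 2 * η := by
      rcases le_or_gt ((x 1 * α - fn n (x 1)) - (x 2 * α - fn n (x 2))) 0 with hs | hs
      · have := mul_nonpos_of_nonneg_of_nonpos (show (0:ℝ) ≤ x 1 - t by linarith)
          (div_nonpos_of_nonpos_of_nonneg hs hh0.le)
        linarith
      · have h1 : x 1 - t ≤ h := by linarith
        have h2 := mul_le_mul_of_nonneg_right h1 (div_nonneg hs.le hh0.le)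
        have h3 : h * (((x 1 * α - fn n (x 1)) - (x 2 * α - fn n (x 2))) / h)
            = (x 1 * α - fn n (x 1)) - (x 2 * α - fn n (x 2)) := by
          field_simp
        linarith
    have := hφr (x 1)
    linarith [hc1.1, hηγ, hhγ]
  · -- generic cell
    push_neg at hC
    set i : ℕ := min (N - 1) ⌊(t + R) / h⌋₊ with hidef
    have hx1 : x 1 = -R + h := by rw [hxsucc 0, hx0]
    have hfl1 : (1:ℝ) ≤ (t + R) / h := by
      rw [le_div_iff₀ hh0]; rw [hx1] at hC; linarith
    have hi1 : 1 ≤ i := le_min (by omega) (Nat.le_floor (by exact_mod_cast hfl1))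
    have hiN : i ≤ N - 1 := min_le_left _ _
    have hxi : x i ≤ t := by
      have h1 : ((i:ℕ):ℝ) ≤ (t + R) / h := by
        refine le_trans ?_ (Nat.floor_le (by linarith))
        exact_mod_cast (min_le_right (N - 1) ⌊(t + R) / h⌋₊)
      rw [le_div_iff₀ hh0] at h1
      simp only [hxdef]; linarith
    have hxi1 : t ≤ x (i + 1) := by
      rcases le_or_gt (⌊(t + R) / h⌋₊) (N - 1) with hc | hc
      · have hieq : i = ⌊(t + R) / h⌋₊ := min_eq_right hc
        have h2 : (t + R) / h < (⌊(t + R) / h⌋₊ : ℝ) + 1 := Nat.lt_floor_add_one _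
        rw [div_lt_iff₀ hh0] at h2
        simp only [hxdef]
        rw [hieq]; push_cast; linarith
      · have hieq : i = N - 1 := min_eq_left (by omega)
        have hxx : x (i + 1) = x N := by rw [hieq, show N - 1 + 1 = N from by omega]
        rw [hxx]; linarith
    have hstep : x i = x (i - 1) + h := by
      rw [← hxsucc (i - 1), show i - 1 + 1 = i from by omega]
    have hk := keyR (hfn n) α (p := x (i - 1)) (q := x i) (by linarith) hxi
    have hden : x i - x (i - 1) = h := by linarith
    rw [hden] at hk
    have hci := habs i (by omega)
    have hci1 := habs (i - 1) (by omega)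
    have hgd : |φ (x i) - φ (x (i - 1))| ≤ h * L := by
      have := grid_diff (i - 1) (by omega)
      rwa [show i - 1 + 1 = i from by omega] at this
    rw [abs_le] at hgd
    have hs_ub : (x i * α - fn n (x i)) - (x (i - 1) * α - fn n (x (i - 1)))
        ≤ h * L + 2 * η := by
      linarith [hci.1, hci1.2, hgd.2]
    have hsucci : x (i + 1) = x i + h := hxsucc i
    have hprod : (t - x i) * (((x i * α - fn n (x i)) - (x (i - 1) * α - fn n (x (i - 1)))) / h)
        ≤ h * L + 2 * η := by
      rcases le_or_gt ((x i * α - fn n (x i)) - (x (i - 1) * α - fn n (x (i - 1)))) 0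
        with hs | hs
      · have := mul_nonpos_of_nonneg_of_nonpos (show (0:ℝ) ≤ t - x i by linarith)
          (div_nonpos_of_nonpos_of_nonneg hs hh0.le)
        linarith
      · have h1 : t - x i ≤ h := by linarith
        have h2 := mul_le_mul_of_nonneg_right h1 (div_nonneg hs.le hh0.le)
        have h3 : h * (((x i * α - fn n (x i)) - (x (i - 1) * α - fn n (x (i - 1)))) / h)
            = (x i * α - fn n (x i)) - (x (i - 1) * α - fn n (x (i - 1))) := by
          field_simp
        linarith
    have := hφr (x i)
    linarith [hci.1, hηγ, hhγ]

set_option maxHeartbeats 1000000 in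
/-- epi-convergence of convex conjugates: if convex `f_n : ℝ → ℝ` converge
pointwise to a convex `f`, then for every `α` in the interior of the finiteness domain of
`f*`, `f*(α) = lim_{δ → 0⁺} limsup_n inf_{|β − α| < δ} f_n*(β)`. -/
theorem conjugate_epi_convergence
    (f : ℝ → ℝ) (fn : ℕ → ℝ → ℝ)
    (hf : ConvexOn ℝ Set.univ f) (hfn : ∀ n, ConvexOn ℝ Set.univ (fn n))
    (hconv : ∀ t : ℝ, Filter.Tendsto (fun n => fn n t) Filter.atTop (𝓝 (f t)))
    (fstar : ℝ → EReal) (hfstar : ∀ α, fstar α = ⨆ t : ℝ, ((t * α - f t : ℝ) : EReal))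
    (fnstar : ℕ → ℝ → EReal)
    (hfnstar : ∀ n α, fnstar n α = ⨆ t : ℝ, ((t * α - fn n t : ℝ) : EReal))
    (α : ℝ) (hα : α ∈ interior {β : ℝ | fstar β < ⊤}) :
    Filter.Tendsto
      (fun δ : ℝ =>
        Filter.limsup (fun n : ℕ => ⨅ β ∈ {β : ℝ | |β - α| < δ}, fnstar n β) Filter.atTop)
      (𝓝[>] (0 : ℝ)) (𝓝 (fstar α)) := by
  have htop : fstar α < ⊤ := by
    have h0 : α ∈ {β : ℝ | fstar β < ⊤} := interior_subset hα
    exact h0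
  have hbot : ((0 * α - f 0 : ℝ) : EReal) ≤ fstar α := by
    rw [hfstar]; exact le_iSup (fun t : ℝ => ((t * α - f t : ℝ) : EReal)) 0
  have hne_bot : fstar α ≠ ⊥ := ((EReal.bot_lt_coe _).trans_le hbot).ne'
  set r := (fstar α).toReal with hrdef
  have hr_eq : fstar α = (r : EReal) := (EReal.coe_toReal htop.ne hne_bot).symm
  have hφr : ∀ t, t * α - f t ≤ r := by
    intro t
    have h1 : ((t * α - f t : ℝ) : EReal) ≤ (r : EReal) := by
      rw [← hr_eq, hfstar]
      exact le_iSup (fun t : ℝ => ((t * α - f t : ℝ) : EReal)) t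
    exact_mod_cast h1
  -- a two-sided finiteness margin
  obtain ⟨ε₁, hε₁0, hball⟩ := Metric.mem_nhds_iff.mp (mem_interior_iff_mem_nhds.mp hα)
  set ε := ε₁ / 2 with hεdef
  have hε0 : 0 < ε := by positivity
  have hp : fstar (α + ε) < ⊤ := by
    apply hball
    simp only [Metric.mem_ball, Real.dist_eq]
    rw [show α + ε - α = ε by ring, abs_of_pos hε0]
    rw [hεdef]; linarith
  have hm : fstar (α - ε) < ⊤ := by
    apply hball
    simp only [Metric.mem_ball, Real.dist_eq]
    rw [show α - ε - α = -ε by ring, abs_neg, abs_of_pos hε0]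
    rw [hεdef]; linarith
  obtain ⟨C₁, hC₁, -⟩ := EReal.lt_iff_exists_real_btwn.mp hp
  obtain ⟨C₂, hC₂, -⟩ := EReal.lt_iff_exists_real_btwn.mp hm
  set C := max C₁ C₂ with hCdef
  have hC1 : ∀ t, t * (α + ε) - f t ≤ C := by
    intro t
    have h1 : ((t * (α + ε) - f t : ℝ) : EReal) < (C₁ : EReal) := by
      refine lt_of_le_of_lt ?_ hC₁
      rw [hfstar]
      exact le_iSup (fun t : ℝ => ((t * (α + ε) - f t : ℝ) : EReal)) t
    have := EReal.coe_lt_coe_iff.mp h1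
    exact le_trans this.le (le_max_left _ _)
  have hC2 : ∀ t, t * (α - ε) - f t ≤ C := by
    intro t
    have h1 : ((t * (α - ε) - f t : ℝ) : EReal) < (C₂ : EReal) := by
      refine lt_of_le_of_lt ?_ hC₂
      rw [hfstar]
      exact le_iSup (fun t : ℝ => ((t * (α - ε) - f t : ℝ) : EReal)) t
    have := EReal.coe_lt_coe_iff.mp h1
    exact le_trans this.le (le_max_right _ _)
  -- upper bound: the limsup of the ball-infima is at most r, for every δ > 0
  have upper : ∀ δ : ℝ, 0 < δ →
      Filter.limsup (fun n : ℕ => ⨅ β ∈ {β : ℝ | |β - α| < δ}, fnstar n β) Filter.atTop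
        ≤ (r : EReal) := by
    intro δ hδ
    have step1 : ∀ n : ℕ, (⨅ β ∈ {β : ℝ | |β - α| < δ}, fnstar n β) ≤ fnstar n α := by
      intro n
      exact iInf₂_le α (by simpa using hδ)
    have step2 :
        Filter.limsup (fun n : ℕ => ⨅ β ∈ {β : ℝ | |β - α| < δ}, fnstar n β) Filter.atTop
          ≤ Filter.limsup (fun n : ℕ => fnstar n α) Filter.atTop :=
      Filter.limsup_le_limsup (Filter.Eventually.of_forall step1)
    have step3 : Filter.limsup (fun n : ℕ => fnstar n α) Filter.atTop ≤ (r : EReal) := by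
      refine le_of_forall_gt_imp_ge_of_dense fun c hc => ?_
      obtain ⟨z, hrz, hzc⟩ := EReal.lt_iff_exists_real_btwn.mp hc
      have hγ : 0 < z - r := by
        have := EReal.coe_lt_coe_iff.mp hrz
        linarith
      have hev := evtl_upper f fn hf hfn hconv α ε C r hε0 hC1 hC2 hφr (z - r) hγ
      refine le_trans (Filter.limsup_le_of_le (h := ?_)) hzc.le
      · filter_upwards [hev] with n hn
        rw [hfnstar]
        refine iSup_le fun t => ?_
        have := hn t
        exact_mod_cast (by exact_mod_cast EReal.coe_le_coe_iff.mpr (by linarith [hn t]) :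
          ((t * α - fn n t : ℝ) : EReal) ≤ ((z : ℝ) : EReal))
    exact step2.trans step3
  -- lower bound
  have lower : ∀ γ : ℝ, 0 < γ → ∀ᶠ δ in 𝓝[>] (0 : ℝ),
      ((r - γ : ℝ) : EReal) ≤
        Filter.limsup (fun n : ℕ => ⨅ β ∈ {β : ℝ | |β - α| < δ}, fnstar n β) Filter.atTop := by
    intro γ hγ
    obtain ⟨t₀, ht₀⟩ : ∃ t₀ : ℝ, r - γ / 2 < t₀ * α - f t₀ := by
      have h1 : ((r - γ / 2 : ℝ) : EReal) < fstar α := by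
        rw [hr_eq]
        exact_mod_cast EReal.coe_lt_coe_iff.mpr (by linarith)
      rw [hfstar] at h1
      obtain ⟨t₀, ht₀⟩ := lt_iSup_iff.mp h1
      exact ⟨t₀, by exact_mod_cast ht₀⟩
    set δ₀ := γ / (4 * (|t₀| + 1)) with hδ₀def
    have hδ₀ : 0 < δ₀ := by positivity
    have ht₀δ : |t₀| * δ₀ ≤ γ / 4 := by
      rw [hδ₀def]
      rw [mul_div_assoc']
      rw [div_le_div_iff₀ (by positivity) (by norm_num)]
      nlinarith [abs_nonneg t₀]
    filter_upwards [Ioo_mem_nhdsGT_of_mem (show (0:ℝ) ∈ Set.Ico 0 δ₀ from ⟨le_refl _, hδ₀⟩)]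
      with δ hδ
    have hev : ∀ᶠ n : ℕ in Filter.atTop,
        ((r - γ : ℝ) : EReal) ≤ ⨅ β ∈ {β : ℝ | |β - α| < δ}, fnstar n β := by
      filter_upwards [(hconv t₀).eventually
        (eventually_abs_sub_lt _ (show (0:ℝ) < γ / 4 by linarith))] with n hn
      refine le_iInf₂ fun β hβ => ?_
      rw [hfnstar]
      refine le_trans ?_ (le_iSup _ t₀)
      refine EReal.coe_le_coe_iff.mpr ?_
      have hβ' : |β - α| < δ := hβ
      rw [abs_lt] at hn
      have h2 : |t₀ * (β - α)| ≤ |t₀| * δ := by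
        rw [abs_mul]
        exact mul_le_mul_of_nonneg_left hβ'.le (abs_nonneg _)
      have h3 := neg_abs_le (t₀ * (β - α))
      have h4 : |t₀| * δ ≤ |t₀| * δ₀ :=
        mul_le_mul_of_nonneg_left hδ.2.le (abs_nonneg _)
      nlinarith [ht₀, hn.1, hn.2]
    calc ((r - γ : ℝ) : EReal)
        ≤ Filter.liminf (fun n : ℕ => ⨅ β ∈ {β : ℝ | |β - α| < δ}, fnstar n β) Filter.atTop :=
          Filter.le_liminf_of_le (h := hev)
      _ ≤ _ := Filter.liminf_le_limsup
  -- assemble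
  rw [hr_eq]
  rw [tendsto_order]
  constructor
  · intro a ha
    obtain ⟨z, haz, hzr⟩ := EReal.lt_iff_exists_real_btwn.mp ha
    have hγ : 0 < r - z := by
      have := EReal.coe_lt_coe_iff.mp hzr
      linarith
    filter_upwards [lower (r - z) hγ] with δ hδ
    refine lt_of_lt_of_le haz (le_trans ?_ hδ)
    norm_num
  · intro b hb
    filter_upwards [self_mem_nhdsWithin] with δ hδ
    exact lt_of_le_of_lt (upper δ hδ) hb
end
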